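/- Let m ≥ 4, k ∈ {2,…,m−2}, and let n ∈ {4,5,…,2^{k+1}+1}. If n is even, then ω(n) ≤ 1/2 − 1/2^k, and if n is odd, then ω(n) ≥ 1/2 + 1/2^k − 1/2^m, where ω(n) = Σ_{i=1}^m ((e₁ + e₂ + ⋯ + e_i) mod 2)/2^i. Consequently, for each k ∈ {2,…,m−2} the box (3/2^m, (2^{k+1}+2)/2^m) × (1/2 − 1/2^k, 1/2 + 1/2^k − 1/2^m) contains no point of P_m^L = {(n/2^m, ω(n)) : n = 0,…,2^m−1}. -/
import Mathlib


/-- The `i`-th digit (1-based) of `n` in base `b`, with the convention that the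
`0`-th digit is `0`. -/
def nthDigit (b n i : ℕ) : ℕ := if i = 0 then 0 else n / b ^ (i - 1) % b
/-- The map `ω(n) = Σ_{i=1}^m ((e₁ + e₂ + ⋯ + e_i) mod 2)/2^i`. -/
noncomputable def omegaMap (m n : ℕ) : ℝ :=
  ∑ i ∈ Finset.Icc 1 m,
    (((∑ j ∈ Finset.Icc 1 i, nthDigit 2 n j) % 2 : ℕ) : ℝ) / (2 : ℝ) ^ i

namespace OmegaAux

def dsum (n i : ℕ) : ℕ := ∑ j ∈ Finset.Icc 1 i, nthDigit 2 n j

lemma nthDigit_le_one (n i : ℕ) : nthDigit 2 n i ≤ 1 := by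
  unfold nthDigit; split
  · omega
  · omega

lemma dsum_one (n : ℕ) : dsum n 1 = n % 2 := by
  simp [dsum, Finset.Icc_self, nthDigit]

lemma dsum_succ (n i : ℕ) : dsum n (i + 1) = dsum n i + nthDigit 2 n (i + 1) :=
  Finset.sum_Icc_succ_top (by omega) _

lemma nthDigit_zero_of_lt (n i K : ℕ) (hn : n < 2 ^ K) (hi : K + 1 ≤ i) :
    nthDigit 2 n i = 0 := by
  unfold nthDigit
  rw [if_neg (by omega)]
  have : n / 2 ^ (i - 1) = 0 :=
    Nat.div_eq_of_lt (lt_of_lt_of_le hn (Nat.pow_le_pow_right (by norm_num) (by omega)))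
  simp [this]

lemma dsum_const (n K i : ℕ) (hn : n < 2 ^ K) (hi : K ≤ i) : dsum n i = dsum n K := by
  induction i, hi using Nat.le_induction with
  | base => rfl
  | succ i hi ih =>
    rw [dsum_succ, nthDigit_zero_of_lt n (i+1) K hn (by omega), ih, Nat.add_zero]

lemma omegaMap_eq (m n : ℕ) :
    omegaMap m n = ∑ i ∈ Finset.Ioc 0 m, ((dsum n i % 2 : ℕ) : ℝ) / (2:ℝ) ^ i := by
  rw [omegaMap, ← Finset.Icc_add_one_left_eq_Ioc]; rfl

lemma geo (a b : ℕ) (h : a ≤ b) :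
    ∑ i ∈ Finset.Ioc a b, (1:ℝ) / 2 ^ i = 1 / 2 ^ a - 1 / 2 ^ b := by
  induction b, h using Nat.le_induction with
  | base => simp
  | succ b hb ih =>
    rw [Finset.sum_Ioc_succ_top hb, ih, pow_succ]
    have : (2:ℝ) ^ b > 0 := by positivity
    field_simp
    ring

lemma part_le (a b : ℕ) (h : a ≤ b) (s : ℕ → ℕ) (hs : ∀ i, s i ≤ 1) :
    ∑ i ∈ Finset.Ioc a b, ((s i : ℕ) : ℝ) / 2 ^ i ≤ 1 / 2 ^ a - 1 / 2 ^ b := by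
  rw [← geo a b h]
  apply Finset.sum_le_sum
  intro i _
  apply div_le_div_of_nonneg_right ?_ (by positivity)
  · exact_mod_cast hs i

lemma even_bound (m k n : ℕ) (hk1 : 2 ≤ k) (hk2 : k + 2 ≤ m)
    (hn1 : 4 ≤ n) (hn2 : n ≤ 2 ^ (k + 1)) (hne : n % 2 = 0) :
    omegaMap m n ≤ 1 / 2 - 1 / (2:ℝ) ^ k := by
  have h4k : (4:ℝ) ≤ 2 ^ k := by
    calc (4:ℝ) = 2 ^ 2 := by norm_num
    _ ≤ 2 ^ k := pow_le_pow_right₀ (by norm_num) hk1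
  have h2kinv : (1:ℝ) / 2 ^ k ≤ 1 / 4 := one_div_le_one_div_of_le (by norm_num) h4k
  have h2mpos : (0:ℝ) < 1 / 2 ^ m := by positivity
  set f : ℕ → ℝ := fun i => ((dsum n i % 2 : ℕ) : ℝ) / (2:ℝ) ^ i with hf
  have hsle : ∀ i, dsum n i % 2 ≤ 1 := fun i => by omega
  rw [omegaMap_eq]
  rcases eq_or_lt_of_le hn2 with heq | hlt
  · -- n = 2^(k+1) : digits 1..k+1 are zero
    have hz : ∀ i ∈ Finset.Ioc 0 (k + 1), f i = 0 := by
      intro i hi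
      simp only [Finset.mem_Ioc] at hi
      have hds : dsum n i = 0 := by
        apply Finset.sum_eq_zero
        intro j hj
        simp only [Finset.mem_Icc] at hj
        unfold nthDigit
        rw [if_neg (by omega), heq, Nat.pow_div (by omega) (by norm_num)]
        have : (2:ℕ) ∣ 2 ^ (k + 1 - (j - 1)) := dvd_pow_self 2 (by omega)
        omega
      simp [hf, hds]
    have hsplit := Finset.sum_Ioc_consecutive f
      (show (0:ℕ) ≤ k + 1 by omega) (show k + 1 ≤ m by omega)
    have hA : ∑ i ∈ Finset.Ioc 0 (k+1), f i = 0 := Finset.sum_eq_zero hz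
    have hB : ∑ i ∈ Finset.Ioc (k+1) m, f i ≤ 1 / 2 ^ (k+1) - 1 / 2 ^ m :=
      part_le (k+1) m (by omega) _ hsle
    have hpow : (1:ℝ) / 2 ^ (k+1) = 1 / 2 * (1 / 2 ^ k) := by
      rw [pow_succ]; ring
    rw [← hsplit, hA, zero_add]
    calc ∑ i ∈ Finset.Ioc (k+1) m, f i ≤ 1 / 2 ^ (k+1) - 1 / 2 ^ m := hB
    _ ≤ 1 / 2 - 1 / 2 ^ k := by rw [hpow]; linarith
  · -- n < 2^(k+1)
    have hconst : ∀ i, k + 1 ≤ i → dsum n i = dsum n (k + 1) :=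
      fun i hi => dsum_const n (k+1) i hlt hi
    have hs1 : dsum n 1 % 2 = 0 := by rw [dsum_one]; omega
    rcases Nat.mod_two_eq_zero_or_one (dsum n (k + 1)) with hp | hp
    · -- total parity even: tail vanishes
      have hsplit1 := Finset.sum_Ioc_consecutive f
        (show (0:ℕ) ≤ k by omega) (show k ≤ m by omega)
      have hsplit2 := Finset.sum_Ioc_consecutive f
        (show (0:ℕ) ≤ 1 by omega) (show 1 ≤ k by omega)
      have hA : ∑ i ∈ Finset.Ioc 0 1, f i = 0 := by
        rw [Finset.sum_Ioc_succ_top (le_refl 0), Finset.Ioc_self, Finset.sum_empty]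
        simp [hf, hs1]
      have hB : ∑ i ∈ Finset.Ioc 1 k, f i ≤ 1 / 2 - 1 / 2 ^ k := by
        have := part_le 1 k (by omega) _ hsle
        simpa using this
      have hC : ∑ i ∈ Finset.Ioc k m, f i = 0 := by
        apply Finset.sum_eq_zero
        intro i hi
        simp only [Finset.mem_Ioc] at hi
        have : dsum n i % 2 = 0 := by rw [hconst i (by omega)]; exact hp
        simp [hf, this]
      rw [← hsplit1, ← hsplit2, hA, hC, zero_add, add_zero]
      exact hB
    · -- total parity odd: find an interior zero
      have hex : ∃ j, 2 ≤ j ∧ j ≤ k ∧ dsum n j % 2 = 0 := by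
        by_contra hcon
        push_neg at hcon
        have hall : ∀ j, 2 ≤ j → j ≤ m → dsum n j % 2 = 1 := by
          intro j h2 hjm
          rcases le_or_gt j k with h | h
          · have := hcon j h2 h; omega
          · rw [hconst j (by omega)]; exact hp
        have hdig : ∀ j, 3 ≤ j → j ≤ m → nthDigit 2 n j = 0 := by
          intro j h3 hjm
          have e1 := hall (j - 1) (by omega) (by omega)
          have e2 := hall j (by omega) hjm
          have e3 : dsum n j = dsum n (j - 1) + nthDigit 2 n j := by
            have := dsum_succ n (j - 1)
            rwa [show j - 1 + 1 = j from by omega] at this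
          have e4 := nthDigit_le_one n j
          omega
        have hd1 : 1 ≤ n / 4 := by omega
        set d := n / 4 with hd
        set t := Nat.log 2 d with ht
        have hle : 2 ^ t ≤ d := Nat.pow_log_le_self 2 (by omega)
        have hlt2 : d < 2 ^ (t + 1) := Nat.lt_pow_succ_log_self (by norm_num) d
        have hdk : d < 2 ^ (k - 1) := by
          have h41 : (2:ℕ) ^ (k + 1) = 4 * 2 ^ (k - 1) := by
            rw [show k + 1 = (k - 1) + 2 from by omega]; ring
          omega
        have htk : t < k - 1 := Nat.log_lt_of_lt_pow (by omega) hdk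
        have hdigit1 : nthDigit 2 n (t + 3) = 1 := by
          unfold nthDigit
          rw [if_neg (by omega), show t + 3 - 1 = t + 2 from by omega]
          have h1 : n / 2 ^ (t + 2) = d / 2 ^ t := by
            rw [hd, Nat.div_div_eq_div_mul]
            congr 1
            rw [pow_succ, pow_succ]; ring
          rw [h1]
          have p1 : 1 ≤ d / 2 ^ t := (Nat.one_le_div_iff (by positivity)).mpr hle
          have p2 : d / 2 ^ t < 2 := by
            rw [Nat.div_lt_iff_lt_mul (by positivity)]
            calc d < 2 ^ (t + 1) := hlt2
            _ = 2 * 2 ^ t := by ring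
          omega
        have := hdig (t + 3) (by omega) (by omega)
        omega
      obtain ⟨j, hj2, hjk, hjz⟩ := hex
      obtain ⟨j', rfl⟩ : ∃ j', j = j' + 2 := ⟨j - 2, by omega⟩
      have hsplit1 := Finset.sum_Ioc_consecutive f
        (show (0:ℕ) ≤ j' + 2 by omega) (show j' + 2 ≤ m by omega)
      have hsplit2 := Finset.sum_Ioc_consecutive f
        (show (0:ℕ) ≤ j' + 1 by omega) (show j' + 1 ≤ j' + 2 by omega)
      have hsplit3 := Finset.sum_Ioc_consecutive f
        (show (0:ℕ) ≤ 1 by omega) (show 1 ≤ j' + 1 by omega)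
      have hA : ∑ i ∈ Finset.Ioc 0 1, f i = 0 := by
        rw [Finset.sum_Ioc_succ_top (le_refl 0), Finset.Ioc_self, Finset.sum_empty]
        simp [hf, hs1]
      have hB : ∑ i ∈ Finset.Ioc 1 (j' + 1), f i ≤ 1 / 2 - 1 / 2 ^ (j' + 1) := by
        have := part_le 1 (j' + 1) (by omega) _ hsle
        simpa using this
      have hC : ∑ i ∈ Finset.Ioc (j' + 1) (j' + 2), f i = 0 := by
        rw [Finset.sum_Ioc_succ_top (le_refl (j' + 1)), Finset.Ioc_self, Finset.sum_empty]
        simp [hf, hjz]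
      have hD : ∑ i ∈ Finset.Ioc (j' + 2) m, f i ≤ 1 / 2 ^ (j' + 2) - 1 / 2 ^ m :=
        part_le (j' + 2) m (by omega) _ hsle
      have hjkle : (1:ℝ) / 2 ^ k ≤ 1 / 2 ^ (j' + 2) := by
        apply one_div_le_one_div_of_le (by positivity)
        exact pow_le_pow_right₀ (by norm_num) hjk
      have hpow : (1:ℝ) / 2 ^ (j' + 1) = 2 * (1 / 2 ^ (j' + 2)) := by
        field_simp; ring
      rw [← hsplit1, ← hsplit2, ← hsplit3, hA, hC, zero_add, add_zero]
      calc (∑ i ∈ Finset.Ioc 1 (j' + 1), f i) + ∑ i ∈ Finset.Ioc (j' + 2) m, f i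
          ≤ (1 / 2 - 1 / 2 ^ (j' + 1)) + (1 / 2 ^ (j' + 2) - 1 / 2 ^ m) := by linarith
      _ ≤ 1 / 2 - 1 / 2 ^ k := by rw [hpow]; linarith

lemma digit_odd_eq (n i : ℕ) (hn : n % 2 = 1) (hi : 2 ≤ i) :
    nthDigit 2 n i = nthDigit 2 (n - 1) i := by
  unfold nthDigit
  rw [if_neg (by omega), if_neg (by omega)]
  have hdvd : ¬ (2 ^ (i - 1) ∣ n) := by
    intro h
    have : (2:ℕ) ∣ n := dvd_trans (dvd_pow_self 2 (by omega)) h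
    omega
  have h1 : n = (n - 1) + 1 := by omega
  have h2 : n / 2 ^ (i - 1) = (n - 1) / 2 ^ (i - 1) := by
    conv_lhs => rw [h1]
    rw [Nat.succ_div, if_neg (by rwa [← h1]), add_zero]
  rw [h2]

lemma dsum_odd (n i : ℕ) (hn : n % 2 = 1) (hi : 1 ≤ i) :
    dsum n i = dsum (n - 1) i + 1 := by
  induction i, hi using Nat.le_induction with
  | base => rw [dsum_one, dsum_one]; omega
  | succ i hi ih =>
    rw [dsum_succ, dsum_succ, ih, digit_odd_eq n (i + 1) hn (by omega)]
    ring

lemma omega_odd (m n : ℕ) (hn : n % 2 = 1) (hm : 1 ≤ m) :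
    omegaMap m n = (1 - 1 / 2 ^ m) - omegaMap m (n - 1) := by
  rw [omegaMap_eq, omegaMap_eq]
  have hcong : ∀ i ∈ Finset.Ioc 0 m,
      ((dsum n i % 2 : ℕ) : ℝ) / (2:ℝ) ^ i
        = 1 / 2 ^ i - ((dsum (n - 1) i % 2 : ℕ) : ℝ) / (2:ℝ) ^ i := by
    intro i hi
    simp only [Finset.mem_Ioc] at hi
    rw [dsum_odd n i hn (by omega)]
    have hx : (dsum (n - 1) i + 1) % 2 + dsum (n - 1) i % 2 = 1 := by omega
    have hc : (((dsum (n - 1) i + 1) % 2 : ℕ) : ℝ)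
        + ((dsum (n - 1) i % 2 : ℕ) : ℝ) = 1 := by exact_mod_cast hx
    have h2 : (((dsum (n - 1) i + 1) % 2 : ℕ) : ℝ)
        = 1 - ((dsum (n - 1) i % 2 : ℕ) : ℝ) := by linarith
    rw [h2]
    ring
  rw [Finset.sum_congr rfl hcong, Finset.sum_sub_distrib, geo 0 m (by omega)]
  norm_num

end OmegaAux

open OmegaAux in
/-- For `m ≥ 4` and `k ∈ {2,…,m−2}`: if `n ∈ {4,…,2^{k+1}+1}` is even then
`ω(n) ≤ 1/2 − 1/2^k`, and if `n` is odd then `ω(n) ≥ 1/2 + 1/2^k − 1/2^m`.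
Consequently the box `(3/2^m, (2^{k+1}+2)/2^m) × (1/2 − 1/2^k, 1/2 + 1/2^k − 1/2^m)`
contains no point of `P_m^L`. -/
theorem omega_empty_box (m k : ℕ) (hm : 4 ≤ m) (hk1 : 2 ≤ k) (hk2 : k ≤ m - 2) :
    (∀ n : ℕ, 4 ≤ n → n ≤ 2 ^ (k + 1) + 1 →
      (Even n → omegaMap m n ≤ 1 / 2 - 1 / (2 : ℝ) ^ k) ∧
      (Odd n → omegaMap m n ≥ 1 / 2 + 1 / (2 : ℝ) ^ k - 1 / (2 : ℝ) ^ m)) ∧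
    (∀ n : ℕ, n < 2 ^ m → ((n : ℝ) / (2 : ℝ) ^ m, omegaMap m n) ∉
      Set.Ioo (3 / (2 : ℝ) ^ m) (((2 : ℝ) ^ (k + 1) + 2) / (2 : ℝ) ^ m) ×ˢ
      Set.Ioo (1 / 2 - 1 / (2 : ℝ) ^ k) (1 / 2 + 1 / (2 : ℝ) ^ k - 1 / (2 : ℝ) ^ m)) := by
  have hkm : k + 2 ≤ m := by omega
  have hpowodd : (2:ℕ) ∣ 2 ^ (k + 1) := dvd_pow_self 2 (by omega)
  have key : ∀ n : ℕ, 4 ≤ n → n ≤ 2 ^ (k + 1) + 1 →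
      (Even n → omegaMap m n ≤ 1 / 2 - 1 / (2 : ℝ) ^ k) ∧
      (Odd n → omegaMap m n ≥ 1 / 2 + 1 / (2 : ℝ) ^ k - 1 / (2 : ℝ) ^ m) := by
    intro n h4 hle
    constructor
    · intro hev
      have hne : n % 2 = 0 := Nat.even_iff.mp hev
      exact even_bound m k n hk1 hkm h4 (by omega) hne
    · intro hodd
      have hno : n % 2 = 1 := Nat.odd_iff.mp hodd
      have hflip := omega_odd m n hno (by omega)
      have hev := even_bound m k (n - 1) hk1 hkm (by omega) (by omega) (by omega)
      rw [ge_iff_le, hflip]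
      linarith
  refine ⟨key, ?_⟩
  intro n hn hmem
  obtain ⟨⟨hx1, hx2⟩, hy1, hy2⟩ := hmem
  have h2m : (0:ℝ) < 2 ^ m := by positivity
  have h2mne : (2:ℝ) ^ m ≠ 0 := ne_of_gt h2m
  have h3n : (3:ℝ) < n := by
    have := mul_lt_mul_of_pos_right hx1 h2m
    rwa [div_mul_cancel₀ _ h2mne, div_mul_cancel₀ _ h2mne] at this
  have hnlt : (n:ℝ) < 2 ^ (k + 1) + 2 := by
    have := mul_lt_mul_of_pos_right hx2 h2m
    rwa [div_mul_cancel₀ _ h2mne, div_mul_cancel₀ _ h2mne] at this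
  have h3n' : 3 < n := by exact_mod_cast h3n
  have hn4 : 4 ≤ n := by omega
  have hlen : n ≤ 2 ^ (k + 1) + 1 := by
    have hc : (n:ℝ) < ((2 ^ (k + 1) + 2 : ℕ) : ℝ) := by push_cast; linarith
    have := (Nat.cast_lt (α := ℝ)).mp hc
    omega
  obtain ⟨he, ho⟩ := key n hn4 hlen
  have hy1' : 1 / 2 - 1 / (2:ℝ) ^ k < omegaMap m n := hy1
  have hy2' : omegaMap m n < 1 / 2 + 1 / (2:ℝ) ^ k - 1 / (2:ℝ) ^ m := hy2
  rcases Nat.even_or_odd n with hev | hodd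
  · linarith [he hev]
  · linarith [ho hodd]
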